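/- arXiv:2506.16864 — 3 statements merged into one kernel-verified Lean document; each statement's English description precedes it below -/
import Mathlib

section
/- Let A and B be connected simple graphs, each with at least two vertices, let f : V(A) → V(B) be a function, and let (a,b) be a vertex of the Sierpiński product A ⊗_f B. Then (a,b) is a separating vertex of A ⊗_f B if and only if at least one of the following holds: (i) a is a separating vertex of A, and there exists a partition H₁, H₂, …, Hₙ (n ≥ 2) of V(A) \ {a} such that whenever hᵢ ∈ Hᵢ and h' lies in the same connected component of A − a as hᵢ, then h' ∈ Hᵢ, and such that whenever hᵢ ∈ Hᵢ and hⱼ ∈ Hⱼ with i ≠ j are both neighbours of a in A, every path in B from f(hᵢ) to f(hⱼ) contains the vertex b; (ii) b is a separating vertex of B, and some connected component of B − b contains no vertex of the set {f(a') : a' a neighbour of a in A}; (iii) f(a') = b for every neighbour a' of a in A. -/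
/-- The Sierpiński product of simple graphs `A` and `B` with respect to `f : V(A) → V(B)`:
vertices are pairs `(a, b)`; two vertices are adjacent iff they lie in the same fibre and
their second coordinates are adjacent in `B`, or their first coordinates are adjacent in `A`
and the second coordinates are given by `f` applied to the other first coordinate. -/
def SierpinskiProd {α β : Type*} (A : SimpleGraph α) (B : SimpleGraph β)
    (f : α → β) : SimpleGraph (α × β) where
  Adj p q := (p.1 = q.1 ∧ B.Adj p.2 q.2) ∨
    (A.Adj p.1 q.1 ∧ p.2 = f q.1 ∧ q.2 = f p.1)
  symm := by
    constructor
    rintro ⟨a₁, b₁⟩ ⟨a₂, b₂⟩ (⟨h, hB⟩ | ⟨hA, h₁, h₂⟩)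
    · exact Or.inl ⟨h.symm, hB.symm⟩
    · exact Or.inr ⟨hA.symm, h₂, h₁⟩
  loopless := by
    constructor
    rintro ⟨a, b⟩ (⟨_, hB⟩ | ⟨hA, _, _⟩)
    · exact B.loopless.irrefl b hB
    · exact A.loopless.irrefl a hA

/-- A vertex `v` of a graph `G` is a separating vertex if deleting `v` (taking the induced
subgraph on the remaining vertices) yields a graph that is not connected. -/
def IsSeparatingVertex {V : Type*} (G : SimpleGraph V) (v : V) : Prop :=
  ¬ (G.induce ({v}ᶜ : Set V)).Connected

/-- A graph `G` is `k`-connected if it has more than `k` vertices and deleting any set of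
fewer than `k` vertices leaves a connected graph. -/
def KConnected {V : Type*} [Fintype V] (k : ℕ) (G : SimpleGraph V) : Prop :=
  k < Fintype.card V ∧ ∀ S : Set V, S.ncard < k → (G.induce Sᶜ).Connected

/-- `W` is a cut-set of `G` if deleting all vertices of `W` strictly increases the number of
connected components. -/
def IsCutSet {V : Type*} (G : SimpleGraph V) (W : Set V) : Prop :=
  Nat.card G.ConnectedComponent < Nat.card (G.induce Wᶜ).ConnectedComponent

/-- `W` is a minimal cut-set of `G` if it is a cut-set and no proper subset is a cut-set. -/
def IsMinCutSet {V : Type*} (G : SimpleGraph V) (W : Set V) : Prop :=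
  IsCutSet G W ∧ ∀ W' ⊂ W, ¬ IsCutSet G W'

/-!
Deleting `(a, b)` from `A ⊗_f B` leaves every fibre `{x} × B` with `x ≠ a` connected, and the
edges `(x, f x')(x', f x)` glue together the fibres over each component of `A − a`. The fibre of
`a` becomes a copy of `B − b` whose vertex `(a, f x)` is joined to the fibre of each neighbour `x`
of `a`. So a component of the punctured product is either a component of this copy of `B − b`
containing no `f x` with `x ~ a` (conditions (ii) and (iii)), or the union of the fibres over some
components of `A − a` together with the paths of `B − b` joining images of neighbours of `a`
(condition (i)).
-/

namespace SimpleGraph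

variable {V : Type*} {G : SimpleGraph V}

theorem isSeparatingVertex_of_adj_closed {v : V} {S : Set V}
    (hS : ∀ ⦃x y⦄, G.Adj x y → x ∈ S → y ≠ v → y ∈ S)
    {u w : V} (hu : u ∈ S) (huv : u ≠ v) (hw : w ∉ S) (hwv : w ≠ v) :
    IsSeparatingVertex G v := by
  intro hconn
  obtain ⟨p⟩ := hconn.preconnected ⟨u, huv⟩ ⟨w, hwv⟩
  suffices ∀ {x y : ({v}ᶜ : Set V)}, (G.induce {v}ᶜ).Walk x y → (x : V) ∈ S → (y : V) ∈ S from
    hw (this p hu)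
  intro x y q
  induction q with
  | nil => exact id
  | @cons _ y _ hxy _ ih => exact fun hx => ih (hS hxy hx y.2)

end SimpleGraph

theorem exists_fin_partition_of_surjective {ι κ : Type*} [Finite κ] {s : Set ι} (g : s → κ)
    (hg : Function.Surjective g) :
    ∃ H : Fin (Nat.card κ) → Set ι, (∀ i, (H i).Nonempty) ∧
      (∀ i j, i ≠ j → Disjoint (H i) (H j)) ∧ (⋃ i, H i) = s ∧
      ∀ i j (x y : s), (x : ι) ∈ H i → (y : ι) ∈ H j → (g x = g y ↔ i = j) := by
  let e := Finite.equivFin κ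
  refine ⟨fun i => {x | ∃ hx : x ∈ s, e (g ⟨x, hx⟩) = i}, fun i => ?_, fun i j hij => ?_, ?_, ?_⟩
  · obtain ⟨x, hx⟩ := hg (e.symm i)
    exact ⟨x, x.2, by simp [hx]⟩
  · exact Set.disjoint_left.2 fun x ⟨_, hi⟩ ⟨_, hj⟩ => hij (hi.symm.trans hj)
  · ext x
    simp only [Set.mem_iUnion]
    exact ⟨fun ⟨_, hx, _⟩ => hx, fun hx => ⟨_, hx, rfl⟩⟩
  · rintro i j x y ⟨-, rfl⟩ ⟨-, rfl⟩
    exact e.injective.eq_iff.symm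

open SimpleGraph

def HasSeparatedNeighbourPartition {α β : Type*} (A : SimpleGraph α) (B : SimpleGraph β)
    (f : α → β) (a : α) (b : β) : Prop :=
  ∃ n : ℕ, 2 ≤ n ∧ ∃ H : Fin n → Set α,
    (∀ i, (H i).Nonempty) ∧
    (∀ i j, i ≠ j → Disjoint (H i) (H j)) ∧
    (⋃ i, H i) = ({a}ᶜ : Set α) ∧
    (∀ i : Fin n, ∀ h h' : ({a}ᶜ : Set α), (h : α) ∈ H i →
      (A.induce ({a}ᶜ : Set α)).Reachable h h' → (h' : α) ∈ H i) ∧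
    (∀ i j : Fin n, i ≠ j → ∀ hi ∈ H i, ∀ hj ∈ H j,
      A.Adj a hi → A.Adj a hj →
      ∀ p : B.Walk (f hi) (f hj), p.IsPath → b ∈ p.support)

namespace SierpinskiProd

variable {α β : Type*} {A : SimpleGraph α} {B : SimpleGraph β} {f : α → β} {a : α} {b : β}

local notation "𝔾" => SimpleGraph.induce ({(a, b)}ᶜ : Set (α × β)) (SierpinskiProd A B f)

theorem adj_mk {x₁ x₂ : α} {y₁ y₂ : β} :
    (SierpinskiProd A B f).Adj (x₁, y₁) (x₂, y₂) ↔
      (x₁ = x₂ ∧ B.Adj y₁ y₂) ∨ (A.Adj x₁ x₂ ∧ y₁ = f x₂ ∧ y₂ = f x₁) :=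
  Iff.rfl

theorem isSeparatingVertex_of_closed {P : Set α} {K : Set β}
    (hP : ∀ ⦃x x'⦄, A.Adj x x' → x ∈ P → x' ≠ a → x' ∈ P)
    (hK : ∀ ⦃y y'⦄, B.Adj y y' → y ∈ K → y' ≠ b → y' ∈ K)
    (hPK : ∀ ⦃x⦄, A.Adj a x → x ∈ P → f x ≠ b → f x ∈ K)
    (hKP : ∀ ⦃x⦄, A.Adj a x → f x ∈ K → x ∈ P)
    {u : α × β} (hu : u.1 ∈ P ∨ u.1 = a ∧ u.2 ∈ K) (hub : u ≠ (a, b))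
    {x : α} (hx : x ∉ P) (hxa : x ≠ a) :
    IsSeparatingVertex (SierpinskiProd A B f) (a, b) := by
  refine isSeparatingVertex_of_adj_closed (S := {p | p.1 ∈ P ∨ p.1 = a ∧ p.2 ∈ K}) ?_ hu hub
    (w := (x, b)) (by rintro (h | ⟨h, -⟩) <;> contradiction) (ne_of_apply_ne Prod.fst hxa)
  rintro ⟨x₁, y₁⟩ ⟨x₂, y₂⟩ hadj hS hne
  obtain ⟨rfl, hy⟩ | ⟨hx, rfl, rfl⟩ := adj_mk.1 hadj <;> obtain h₁ | ⟨ha, h₁⟩ := hS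
  · exact Or.inl h₁
  · exact Or.inr ⟨ha, hK hy h₁ fun hb => hne (Prod.ext ha hb)⟩
  · by_cases hx₂ : x₂ = a
    · exact Or.inr ⟨hx₂, hPK (hx₂ ▸ hx.symm) h₁ fun hb => hne (Prod.ext hx₂ hb)⟩
    · exact Or.inl (hP hx h₁ hx₂)
  · exact Or.inl (hKP (ha ▸ hx) h₁)

theorem isSeparatingVertex_of_supp_avoids [Nontrivial α]
    (J : (B.induce ({b}ᶜ : Set β)).ConnectedComponent)
    (hJ : ∀ v : ({b}ᶜ : Set β), v ∈ J.supp → ∀ x, A.Adj a x → f x ≠ v) :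
    IsSeparatingVertex (SierpinskiProd A B f) (a, b) := by
  obtain ⟨q, hq⟩ := J.nonempty_supp
  obtain ⟨x, hx⟩ := exists_ne a
  refine isSeparatingVertex_of_closed (P := ∅) (K := (↑) '' J.supp) (fun _ _ _ h => h.elim)
    ?_ (fun _ _ h => h.elim) ?_ (u := (a, q)) (Or.inr ⟨rfl, q, hq, rfl⟩)
    (ne_of_apply_ne Prod.snd q.2) (Set.notMem_empty x) hx
  · rintro y y' hyy' ⟨v, hv, rfl⟩ hy'
    exact ⟨⟨y', hy'⟩, J.mem_supp_of_adj_mem_supp hv hyy', rfl⟩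
  · rintro x hax ⟨v, hv, hfv⟩
    exact absurd hfv.symm (hJ v hv x hax)

theorem isSeparatingVertex_of_forall_adj_eq [Nontrivial α] [Nontrivial β]
    (h : ∀ x, A.Adj a x → f x = b) : IsSeparatingVertex (SierpinskiProd A B f) (a, b) := by
  obtain ⟨y, hy⟩ := exists_ne b
  exact isSeparatingVertex_of_supp_avoids ((B.induce {b}ᶜ).connectedComponentMk ⟨y, hy⟩)
    fun v _ x hax hfv => v.2 (hfv ▸ h x hax)

theorem isSeparatingVertex_of_hasSeparatedNeighbourPartition
    (h : HasSeparatedNeighbourPartition A B f a b) :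
    IsSeparatingVertex (SierpinskiProd A B f) (a, b) := by
  classical
  obtain ⟨n, hn, H, hne, hdisj, hunion, hclosed, hpath⟩ := h
  have mem_H : ∀ {x}, x ≠ a → ∃ i, x ∈ H i := fun hx => Set.mem_iUnion.1 (hunion ▸ hx)
  have ne_of_mem_H : ∀ {i x}, x ∈ H i → x ≠ a := fun hx =>
    (hunion ▸ Set.mem_iUnion_of_mem _ hx : _ ∈ ({a}ᶜ : Set α))
  let i₀ : Fin n := ⟨0, by omega⟩
  obtain ⟨x₀, hx₀⟩ := hne i₀
  obtain ⟨x₁, hx₁⟩ := hne ⟨1, by omega⟩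
  refine isSeparatingVertex_of_closed (P := H i₀)
    (K := {y | ∃ x ∈ H i₀, A.Adj a x ∧ ∃ p : B.Walk y (f x), b ∉ p.support})
    ?_ ?_ ?_ ?_ (u := (x₀, b)) (Or.inl hx₀) (ne_of_apply_ne Prod.fst (ne_of_mem_H hx₀))
    (Set.disjoint_right.1 (hdisj i₀ _ (by simp [i₀, Fin.ext_iff])) hx₁) (ne_of_mem_H hx₁)
  · intro x x' hxx' hx hx'
    exact hclosed i₀ ⟨x, ne_of_mem_H hx⟩ ⟨x', hx'⟩ hx (Adj.reachable hxx')
  · rintro y y' hyy' ⟨x, hx, hax, p, hp⟩ hy'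
    exact ⟨x, hx, hax, p.cons hyy'.symm, by simp [hp, Ne.symm hy']⟩
  · intro x hax hx hfx
    exact ⟨x, hx, hax, Walk.nil, by simpa using Ne.symm hfx⟩
  · rintro x hax ⟨x', hx', hax', p, hp⟩
    by_contra hx
    obtain ⟨j, hj⟩ := mem_H hax.ne'
    have hj₀ : i₀ ≠ j := by rintro rfl; exact hx hj
    have hb := hpath i₀ j hj₀ x' hx' x hj hax' hax _ p.reverse.bypass_isPath
    exact hp (by simpa using p.reverse.support_bypass_subset_support hb)

theorem reachable_of_fst_ne (hB : B.Connected) {x : α} (hx : x ≠ a) (y y' : β) :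
    Reachable 𝔾 ⟨(x, y), ne_of_apply_ne Prod.fst hx⟩ ⟨(x, y'), ne_of_apply_ne Prod.fst hx⟩ :=
  (hB.preconnected y y').map
    (⟨fun z => ⟨(x, z), ne_of_apply_ne Prod.fst hx⟩, fun h => Or.inl ⟨rfl, h⟩⟩ : B →g 𝔾)

theorem reachable_of_reachable_compl_fst (hB : B.Connected) {x x' : ({a}ᶜ : Set α)}
    (h : (A.induce {a}ᶜ).Reachable x x') (y y' : β) :
    Reachable 𝔾 ⟨((x : α), y), ne_of_apply_ne Prod.fst x.2⟩
      ⟨((x' : α), y'), ne_of_apply_ne Prod.fst x'.2⟩ := by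
  obtain ⟨p⟩ := h
  induction p generalizing y with
  | @nil x => exact reachable_of_fst_ne hB x.2 y y'
  | @cons x₁ x₂ _ hx₁₂ _ ih =>
    have hcross : SimpleGraph.Adj 𝔾 ⟨((x₁ : α), f x₂), ne_of_apply_ne Prod.fst x₁.2⟩
        ⟨((x₂ : α), f x₁), ne_of_apply_ne Prod.fst x₂.2⟩ :=
      Or.inr ⟨hx₁₂, rfl, rfl⟩
    exact (reachable_of_fst_ne hB x₁.2 _ _).trans (hcross.reachable.trans (ih _))

theorem reachable_of_reachable_compl_snd {y y' : ({b}ᶜ : Set β)}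
    (h : (B.induce {b}ᶜ).Reachable y y') :
    Reachable 𝔾 ⟨(a, (y : β)), ne_of_apply_ne Prod.snd y.2⟩
      ⟨(a, (y' : β)), ne_of_apply_ne Prod.snd y'.2⟩ :=
  h.map (⟨fun z => ⟨(a, z), ne_of_apply_ne Prod.snd z.2⟩, fun h => Or.inl ⟨rfl, h⟩⟩ :
    B.induce {b}ᶜ →g 𝔾)

theorem adj_of_adj_of_ne {x : α} (hax : A.Adj a x) (hfx : f x ≠ b) :
    SimpleGraph.Adj 𝔾 ⟨(a, f x), ne_of_apply_ne Prod.snd hfx⟩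
      ⟨(x, f a), ne_of_apply_ne Prod.fst hax.ne'⟩ :=
  Or.inr ⟨hax, rfl, rfl⟩

theorem reachable_of_walk_not_mem_support {x x' : α} (hax : A.Adj a x) (hax' : A.Adj a x')
    (p : B.Walk (f x) (f x')) (hp : b ∉ p.support) :
    Reachable 𝔾 ⟨(x, f a), ne_of_apply_ne Prod.fst hax.ne'⟩
      ⟨(x', f a), ne_of_apply_ne Prod.fst hax'.ne'⟩ := by
  have hfx : f x ≠ b := fun h => hp (h ▸ p.start_mem_support)
  have hfx' : f x' ≠ b := fun h => hp (h ▸ p.end_mem_support)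
  have hp' : (B.induce {b}ᶜ).Reachable ⟨f x, hfx⟩ ⟨f x', hfx'⟩ :=
    (p.induce {b}ᶜ fun z hz (hzb : z = b) => hp (hzb ▸ hz)).reachable
  exact (adj_of_adj_of_ne hax hfx).symm.reachable.trans
    ((reachable_of_reachable_compl_snd hp').trans (adj_of_adj_of_ne hax' hfx').reachable)

theorem exists_adj_reachable_image
    (hJ : ¬ (IsSeparatingVertex B b ∧ ∃ J : (B.induce ({b}ᶜ : Set β)).ConnectedComponent,
      ∀ v : ({b}ᶜ : Set β), v ∈ J.supp → ∀ x, A.Adj a x → f x ≠ v))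
    (hf : ¬ ∀ x, A.Adj a x → f x = b) (y : ({b}ᶜ : Set β)) :
    ∃ x, A.Adj a x ∧ ∃ hx : f x ≠ b, (B.induce {b}ᶜ).Reachable y ⟨f x, hx⟩ := by
  by_cases hsepB : IsSeparatingVertex B b
  · by_contra! h
    refine hJ ⟨hsepB, connectedComponentMk _ y, fun ⟨v, hvb⟩ hv x hax hfx => ?_⟩
    subst hfx
    exact h x hax hvb (ConnectedComponent.exact hv).symm
  · push Not at hf
    obtain ⟨x, hax, hfx⟩ := hf
    exact ⟨x, hax, hfx, (not_not.1 hsepB).preconnected _ _⟩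

theorem exists_reachable_fst_ne (hB : B.Connected)
    (hmeet : ∀ y : ({b}ᶜ : Set β), ∃ x, A.Adj a x ∧ ∃ hx : f x ≠ b,
      (B.induce {b}ᶜ).Reachable y ⟨f x, hx⟩)
    (w : ({(a, b)}ᶜ : Set (α × β))) :
    ∃ x : ({a}ᶜ : Set α), Reachable 𝔾 w ⟨((x : α), f a), ne_of_apply_ne Prod.fst x.2⟩ := by
  obtain ⟨⟨x, y⟩, hxy⟩ := w
  by_cases hx : x = a
  · subst hx
    obtain ⟨x', hax', hfx', h⟩ := hmeet ⟨y, ne_of_apply_ne (Prod.mk x) hxy⟩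
    exact ⟨⟨x', hax'.ne'⟩,
      (reachable_of_reachable_compl_snd h).trans (adj_of_adj_of_ne hax' hfx').reachable⟩
  · exact ⟨⟨x, hx⟩, reachable_of_fst_ne hB hx y (f a)⟩

theorem isSeparatingVertex_and_hasSeparatedNeighbourPartition [Finite α] [Finite β]
    [Nontrivial α] (hB : B.Connected) (hsep : IsSeparatingVertex (SierpinskiProd A B f) (a, b))
    (hmeet : ∀ y : ({b}ᶜ : Set β), ∃ x, A.Adj a x ∧ ∃ hx : f x ≠ b,
      (B.induce {b}ᶜ).Reachable y ⟨f x, hx⟩) :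
    IsSeparatingVertex A a ∧ HasSeparatedNeighbourPartition A B f a b := by
  let g (x : ({a}ᶜ : Set α)) : ConnectedComponent 𝔾 :=
    connectedComponentMk 𝔾 ⟨((x : α), f a), ne_of_apply_ne Prod.fst x.2⟩
  have hg : Function.Surjective g := ConnectedComponent.ind fun w =>
    (exists_reachable_fst_ne hB hmeet w).imp fun _ h => (ConnectedComponent.sound h).symm
  have hg_reach {x x'} (h : (A.induce {a}ᶜ).Reachable x x') : g x = g x' :=
    ConnectedComponent.sound (reachable_of_reachable_compl_fst hB h _ _)
  have hC : Nontrivial (ConnectedComponent 𝔾) := by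
    obtain ⟨x, hx⟩ := exists_ne a
    refine not_subsingleton_iff_nontrivial.1 fun _ => hsep ((connected_iff _).2 ⟨fun u v =>
      ConnectedComponent.exact (Subsingleton.elim _ _), ⟨⟨(x, f a), ne_of_apply_ne Prod.fst hx⟩⟩⟩)
  have hsepA : IsSeparatingVertex A a := fun hA => not_subsingleton (ConnectedComponent 𝔾)
    ⟨hg.forall₂.2 fun x x' => hg_reach (hA.preconnected x x')⟩
  obtain ⟨H, hne, hdisj, hunion, hidx⟩ := exists_fin_partition_of_surjective g hg
  refine ⟨hsepA, _, Finite.one_lt_card_iff_nontrivial.2 hC, H, hne, hdisj, hunion, ?_, ?_⟩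
  · intro i x x' hx hxx'
    obtain ⟨j, hj⟩ := Set.mem_iUnion.1 (hunion.symm ▸ x'.2 : (x' : α) ∈ ⋃ i, H i)
    rwa [(hidx i j x x' hx hj).1 (hg_reach hxx')]
  · intro i j hij x hx x' hx' hax hax' p _
    by_contra hb
    exact hij ((hidx i j ⟨x, hax.ne'⟩ ⟨x', hax'.ne'⟩ hx hx').1
      (ConnectedComponent.sound (reachable_of_walk_not_mem_support hax hax' p hb)))

end SierpinskiProd

open SierpinskiProd

theorem sierpinski_separating_vertex_iff_general {α β : Type*} [Fintype α] [Fintype β]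
    (A : SimpleGraph α) (B : SimpleGraph β) (f : α → β)
    (hB : B.Connected)
    (hcardA : 2 ≤ Fintype.card α) (hcardB : 2 ≤ Fintype.card β)
    (a : α) (b : β) :
    IsSeparatingVertex (SierpinskiProd A B f) (a, b) ↔
      ((IsSeparatingVertex A a ∧
        ∃ n : ℕ, 2 ≤ n ∧ ∃ H : Fin n → Set α,
          (∀ i, (H i).Nonempty) ∧
          (∀ i j, i ≠ j → Disjoint (H i) (H j)) ∧
          (⋃ i, H i) = ({a}ᶜ : Set α) ∧
          (∀ i : Fin n, ∀ h h' : ({a}ᶜ : Set α), (h : α) ∈ H i →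
            (A.induce ({a}ᶜ : Set α)).Reachable h h' → (h' : α) ∈ H i) ∧
          (∀ i j : Fin n, i ≠ j → ∀ hi ∈ H i, ∀ hj ∈ H j,
            A.Adj a hi → A.Adj a hj →
            ∀ p : B.Walk (f hi) (f hj), p.IsPath → b ∈ p.support)) ∨
      (IsSeparatingVertex B b ∧
        ∃ J : (B.induce ({b}ᶜ : Set β)).ConnectedComponent,
          ∀ v : ({b}ᶜ : Set β), v ∈ J.supp → ∀ a', A.Adj a a' → f a' ≠ (v : β)) ∨
      (∀ a', A.Adj a a' → f a' = b)) := by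
  have : Nontrivial α := Fintype.one_lt_card_iff_nontrivial.1 hcardA
  have : Nontrivial β := Fintype.one_lt_card_iff_nontrivial.1 hcardB
  refine ⟨fun hsep => or_iff_not_imp_right.2 fun h => ?_, ?_⟩
  · obtain ⟨hJ, hf⟩ := not_or.1 h
    exact isSeparatingVertex_and_hasSeparatedNeighbourPartition hB hsep
      (exists_adj_reachable_image hJ hf)
  · rintro (⟨-, h⟩ | ⟨-, J, hJ⟩ | h)
    · exact isSeparatingVertex_of_hasSeparatedNeighbourPartition h
    · exact isSeparatingVertex_of_supp_avoids J hJ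
    · exact isSeparatingVertex_of_forall_adj_eq h

/-- **Theorem (separating vertices of Sierpiński products).**
Let `A`, `B` be connected nontrivial graphs and `f : V(A) → V(B)`. Then `(a, b)` is a
separating vertex of `A ⊗_f B` iff (i) `a` is a separating vertex of `A` and there is a
partition `H₁, …, Hₙ` (`n ≥ 2`) of `V(A) \ {a}` into unions of connected components of
`A − a` such that for neighbours `hᵢ ∈ Hᵢ`, `hⱼ ∈ Hⱼ` of `a` with `i ≠ j`, the vertex `b`
lies on every `f(hᵢ)f(hⱼ)`-path in `B`; or (ii) `b` is a separating vertex of `B` and some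
connected component of `B − b` avoids the set `{f(a') : a a' ∈ E(A)}`; or (iii) every
neighbour of `a` is mapped to `b` by `f`. -/
theorem sierpinski_separating_vertex_iff {α β : Type*} [Fintype α] [Fintype β]
    (A : SimpleGraph α) (B : SimpleGraph β) (f : α → β)
    (hA : A.Connected) (hB : B.Connected)
    (hcardA : 2 ≤ Fintype.card α) (hcardB : 2 ≤ Fintype.card β)
    (a : α) (b : β) :
    IsSeparatingVertex (SierpinskiProd A B f) (a, b) ↔
      ((IsSeparatingVertex A a ∧
        ∃ n : ℕ, 2 ≤ n ∧ ∃ H : Fin n → Set α,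
          (∀ i, (H i).Nonempty) ∧
          (∀ i j, i ≠ j → Disjoint (H i) (H j)) ∧
          (⋃ i, H i) = ({a}ᶜ : Set α) ∧
          (∀ i : Fin n, ∀ h h' : ({a}ᶜ : Set α), (h : α) ∈ H i →
            (A.induce ({a}ᶜ : Set α)).Reachable h h' → (h' : α) ∈ H i) ∧
          (∀ i j : Fin n, i ≠ j → ∀ hi ∈ H i, ∀ hj ∈ H j,
            A.Adj a hi → A.Adj a hj →
            ∀ p : B.Walk (f hi) (f hj), p.IsPath → b ∈ p.support)) ∨
      (IsSeparatingVertex B b ∧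
        ∃ J : (B.induce ({b}ᶜ : Set β)).ConnectedComponent,
          ∀ v : ({b}ᶜ : Set β), v ∈ J.supp → ∀ a', A.Adj a a' → f a' ≠ (v : β)) ∨
      (∀ a', A.Adj a a' → f a' = b)) :=
  sierpinski_separating_vertex_iff_general A B f hB hcardA hcardB a b
end

section
/- Let K₄ be the complete graph on four vertices with V(K₄) = {a₁,a₂,a₃,a₄}, let B be a connected simple graph with at least three vertices, and let f : V(K₄) → V(B) be a function such that the Sierpiński product K₄ ⊗_f B is 3-connected. If {b',b''} is a cut-set of B consisting of two distinct vertices, then the graph B − b' − b'' has exactly two connected components, and each of these components contains exactly two of the four vertices f(a₁), f(a₂), f(a₃), f(a₄). -/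
/-!
Deleting the two vertices `(a, b')`, `(a, b'')` leaves `K₄ ⊗_f B` connected, so a path from a
vertex `(a, c)`, with `c` in a component `C` of `B − b' − b''`, to another fibre must leave
`{a} × C` through an edge `(a, f a') ~ (a', f a)`; hence `C` contains `f a'` for some `a' ≠ a`.
Applied twice, every component contains at least two of the four values `f aᵢ`. As `{b', b''}`
is a cut-set there are at least two components, so there are exactly two, with two values each.
-/

open SimpleGraph Function

theorem card_eq_and_ncard_eq_of_pairwise_disjoint {ι κ : Type*} [Finite ι] [Finite κ]
    {T : κ → Set ι} (hT : Pairwise (Disjoint on T)) {m k : ℕ} (hm : 0 < m)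
    (hTm : ∀ c, m ≤ (T c).ncard) (hι : Nat.card ι ≤ m * k) (hκ : k ≤ Nat.card κ) :
    Nat.card κ = k ∧ ∀ c, (T c).ncard = m := by
  have := Fintype.ofFinite κ
  have hsum : ∑ c, (T c).ncard ≤ m * k := calc
    ∑ c, (T c).ncard = (⋃ c, T c).ncard := by
      rw [Set.ncard_iUnion_of_finite (fun _ ↦ Set.toFinite _) hT, finsum_eq_sum_of_fintype]
    _ ≤ Nat.card ι := Set.ncard_le_card _
    _ ≤ m * k := hι
  have hlow : ∑ _c : κ, m ≤ ∑ c, (T c).ncard := Finset.sum_le_sum fun c _ ↦ hTm c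
  have hconst : ∑ _c : κ, m = m * Nat.card κ := by
    simp [Nat.card_eq_fintype_card, mul_comm]
  have hk : Nat.card κ = k :=
    le_antisymm (Nat.le_of_mul_le_mul_left (hconst ▸ hlow.trans hsum) hm) hκ
  have hsum_eq : ∑ _c : κ, m = ∑ c, (T c).ncard :=
    le_antisymm hlow (hsum.trans (by rw [hconst, hk]))
  exact ⟨hk, fun c ↦ ((Finset.sum_eq_sum_iff_of_le fun c _ ↦ hTm c).mp hsum_eq c
    (Finset.mem_univ c)).symm⟩

section

variable {α β : Type*}

def componentPreimage {B : SimpleGraph β} {s : Set β} (f : α → β)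
    (C : (B.induce s).ConnectedComponent) : Set α :=
  {a | ∃ h : f a ∈ s, (B.induce s).connectedComponentMk ⟨f a, h⟩ = C}

theorem pairwise_disjoint_componentPreimage {B : SimpleGraph β} {s : Set β} (f : α → β) :
    Pairwise (Disjoint on fun C : (B.induce s).ConnectedComponent ↦ componentPreimage f C) := by
  intro C D hCD
  refine Set.disjoint_left.mpr ?_
  rintro a ⟨_, rfl⟩ ⟨_, rfl⟩
  exact hCD rfl

theorem SierpinskiProd.exists_adj_mem_componentPreimage {A : SimpleGraph α} {B : SimpleGraph β}
    {f : α → β} {a a₀ : α} (ha₀ : a₀ ≠ a) {W : Set β}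
    (hconn : ((SierpinskiProd A B f).induce ({a} ×ˢ W)ᶜ).Preconnected)
    (C : (B.induce Wᶜ).ConnectedComponent) :
    ∃ a', A.Adj a a' ∧ a' ∈ componentPreimage f C := by
  obtain ⟨⟨c, hc⟩, hcC⟩ : ∃ v, (B.induce Wᶜ).connectedComponentMk v = C := C.exists_rep
  let inC (x : α × β) : Prop :=
    x.1 = a ∧ ∃ h : x.2 ∈ Wᶜ, (B.induce Wᶜ).connectedComponentMk ⟨x.2, h⟩ = C
  have leaving_edge : ∀ x y, (SierpinskiProd A B f).Adj x y → inC x → y ∉ {a} ×ˢ W → ¬ inC y →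
      ∃ a', A.Adj a a' ∧ a' ∈ componentPreimage f C := by
    rintro ⟨_, x⟩ ⟨a', y⟩ hxy ⟨rfl, hx, hxC⟩ hyW hy
    rcases hxy with ⟨rfl, hadj⟩ | ⟨hadj, rfl, -⟩
    · have hy' : y ∈ Wᶜ := fun h ↦ hyW ⟨rfl, h⟩
      refine absurd ⟨rfl, hy', ?_⟩ hy
      rw [← hxC]
      exact (ConnectedComponent.connectedComponentMk_eq_of_adj
        (G := B.induce Wᶜ) (v := ⟨x, hx⟩) (w := ⟨y, hy'⟩) hadj).symm
    · exact ⟨a', hadj, hx, hxC⟩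
  obtain ⟨p⟩ := hconn (u := ⟨(a, c), fun h ↦ hc h.2⟩) (v := ⟨(a₀, c), fun h ↦ ha₀ h.1⟩)
  obtain ⟨d, -, hx, hy⟩ :=
    p.exists_boundary_dart {x | inC x} ⟨rfl, hc, hcC⟩ fun h ↦ ha₀ h.1
  exact leaving_edge _ _ d.adj hx d.snd.2 hy

theorem two_le_ncard_componentPreimage [Finite α] [Nontrivial α] {B : SimpleGraph β}
    {f : α → β} {W : Set β}
    (hconn : ∀ a, ((SierpinskiProd (completeGraph α) B f).induce ({a} ×ˢ W)ᶜ).Preconnected)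
    (C : (B.induce Wᶜ).ConnectedComponent) : 2 ≤ (componentPreimage f C).ncard := by
  obtain ⟨a₀, a₁, h₀₁⟩ := exists_pair_ne α
  obtain ⟨a₂, h₁₂, ha₂⟩ :=
    SierpinskiProd.exists_adj_mem_componentPreimage h₀₁ (hconn a₁) C
  obtain ⟨a₃, h₂₃, ha₃⟩ :=
    SierpinskiProd.exists_adj_mem_componentPreimage h₁₂ (hconn a₂) C
  calc 2 = ({a₂, a₃} : Set α).ncard := (Set.ncard_pair h₂₃).symm
    _ ≤ (componentPreimage f C).ncard :=
      Set.ncard_le_ncard (Set.insert_subset ha₂ (Set.singleton_subset_iff.mpr ha₃))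

end

theorem sierpinski_K4_two_cut_general {β : Type*} [Fintype β]
    (B : SimpleGraph β)
    (f : Fin 4 → β)
    (h3 : KConnected 3 (SierpinskiProd (SimpleGraph.completeGraph (Fin 4)) B f))
    (b' b'' : β) (hcut : IsCutSet B {b', b''}) :
    Nat.card (B.induce ({b', b''}ᶜ : Set β)).ConnectedComponent = 2 ∧
    ∀ C : (B.induce ({b', b''}ᶜ : Set β)).ConnectedComponent,
      ({i : Fin 4 | ∃ h : f i ∈ ({b', b''}ᶜ : Set β),
        (B.induce ({b', b''}ᶜ : Set β)).connectedComponentMk ⟨f i, h⟩ = C}).ncard = 2 := by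
  have hconn (a : Fin 4) : ((SierpinskiProd (completeGraph (Fin 4)) B f).induce
      ({a} ×ˢ {b', b''})ᶜ).Preconnected := by
    refine (h3.2 _ ?_).preconnected
    rw [Set.singleton_prod, Set.ncard_image_of_injective _ (Prod.mk_right_injective a)]
    exact (Set.ncard_insert_le _ _).trans_lt (by simp)
  have hsplit : 2 ≤ Nat.card (B.induce ({b', b''}ᶜ : Set β)).ConnectedComponent := by
    have : Nonempty β := ⟨b'⟩
    exact Nat.lt_of_le_of_lt Nat.card_pos hcut
  exact card_eq_and_ncard_eq_of_pairwise_disjoint (pairwise_disjoint_componentPreimage f)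
    two_pos (two_le_ncard_componentPreimage hconn) (by simp) hsplit

/-- **Proposition (part).** If `K₄ ⊗_f B` is `3`-connected (`B` connected, at least three
vertices) and `{b', b''}` is a `2`-element cut-set of `B`, then `B − b' − b''` has exactly
two connected components, each containing exactly two of `f(a₁), f(a₂), f(a₃), f(a₄)`. -/
theorem sierpinski_K4_two_cut {β : Type*} [Fintype β]
    (B : SimpleGraph β) (hB : B.Connected) (hcardB : 3 ≤ Fintype.card β)
    (f : Fin 4 → β)
    (h3 : KConnected 3 (SierpinskiProd (SimpleGraph.completeGraph (Fin 4)) B f))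
    (b' b'' : β) (hne : b' ≠ b'') (hcut : IsCutSet B {b', b''}) :
    Nat.card (B.induce ({b', b''}ᶜ : Set β)).ConnectedComponent = 2 ∧
    ∀ C : (B.induce ({b', b''}ᶜ : Set β)).ConnectedComponent,
      ({i : Fin 4 | ∃ h : f i ∈ ({b', b''}ᶜ : Set β),
        (B.induce ({b', b''}ᶜ : Set β)).connectedComponentMk ⟨f i, h⟩ = C}).ncard = 2 :=
  sierpinski_K4_two_cut_general B f h3 b' b'' hcut
end

section
/- Let A be a connected simple graph equipped with a colouring c : V(A) → {1,2,3} of its vertices by three colours such that every vertex of A has exactly one neighbour of each of the three colours (in particular A is 3-regular). Then A is 2-connected. -/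
/-!
Delete a vertex `v`. The neighbour `x` of `v` of colour `c v` is joined to the neighbour `y` of
any other colour `j` avoiding `v`: in the subgraph induced by the vertices `≠ v` of colours
`c v` and `j`, every vertex has degree `2` except `x` and `y`, which lose their edge to `v` and
have degree `1`, so by the handshake lemma `x` and `y` lie in the same component. Hence all
neighbours of `v` stay together, and any walk through `v` can be rerouted.
-/

open Finset

namespace SimpleGraph

variable {V : Type*} {G : SimpleGraph V}

theorem Reachable.of_odd_degree [Fintype V] [DecidableRel G.Adj] {x y : V}
    (hx : Odd (G.degree x)) (h : ∀ a, a ≠ x → a ≠ y → Even (G.degree a)) : G.Reachable x y := by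
  classical
  let C : Set V := {a | G.Reachable x a}
  have hdeg (a : C) : (G.induce C).degree a = G.degree a :=
    degree_induce_of_neighborSet_subset fun b hab => a.2.trans (Adj.reachable hab)
  obtain ⟨⟨w, hxw⟩, hwx, hw⟩ :=
    (G.induce C).exists_ne_odd_degree_of_exists_odd_degree ⟨x, Reachable.refl x⟩
      (by rwa [hdeg])
  rw [hdeg] at hw
  by_contra hxy
  exact Nat.not_even_iff_odd.mpr hw <|
    h w (fun h => hwx (Subtype.ext h)) (by rintro rfl; exact hxy hxw)

theorem Preconnected.induce_compl_singleton_of_reachable_adj (hG : G.Preconnected) {v x : V}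
    (hx : x ≠ v) (h : ∀ u (hu : G.Adj v u), (G.induce {v}ᶜ).Reachable ⟨x, hx⟩ ⟨u, hu.ne'⟩) :
    (G.induce {v}ᶜ).Preconnected := by
  have hwalk : ∀ {a b : V}, G.Walk a b →
      (∀ ha : a ≠ v, (G.induce {v}ᶜ).Reachable ⟨x, hx⟩ ⟨a, ha⟩) →
      ∀ hb : b ≠ v, (G.induce {v}ᶜ).Reachable ⟨x, hx⟩ ⟨b, hb⟩ := by
    intro a b p
    induction p with
    | nil => exact id
    | @cons a a' b hadj p ih =>
      intro ha
      refine ih fun ha' => ?_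
      by_cases hav : a = v
      · subst hav
        exact h a' hadj
      · exact (ha hav).trans (Adj.reachable (G := G.induce {v}ᶜ) hadj)
  have hreach (b : V) (hb : b ≠ v) : (G.induce {v}ᶜ).Reachable ⟨x, hx⟩ ⟨b, hb⟩ :=
    hwalk (hG x b).some (fun _ => Reachable.refl _) hb
  rintro ⟨a, ha⟩ ⟨b, hb⟩
  exact (hreach a ha).symm.trans (hreach b hb)

theorem kConnected_two_of_connected_induce_compl_singleton [Fintype V]
    (hcard : 2 < Fintype.card V) (hG : G.Connected) (h : ∀ v, (G.induce {v}ᶜ).Connected) :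
    KConnected 2 G := by
  refine ⟨hcard, fun S hS => ?_⟩
  obtain hS0 | hS1 : S.ncard = 0 ∨ S.ncard = 1 := by omega
  · rw [(Set.ncard_eq_zero S.toFinite).mp hS0, Set.compl_empty]
    exact (induceUnivIso G).connected_iff.mpr hG
  · obtain ⟨v, rfl⟩ := Set.ncard_eq_one.mp hS1
    exact h v

section UniqueColoredNeighbors

variable {α ι : Type*} {A : SimpleGraph α} {c : α → ι}
  (hc : ∀ a i, ∃! a', A.Adj a a' ∧ c a' = i)
include hc

theorem card_filter_adj_color_mem [Fintype α] [DecidableRel A.Adj] [DecidableEq ι] (a : α)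
    (s : Finset ι) : #{b | A.Adj a b ∧ c b ∈ s} = #s := by
  refine card_bij (fun b _ => c b) (fun b hb => (mem_filter.mp hb).2.2) ?_ ?_
  · intro b hb b' hb' hbb'
    simp only [mem_filter, mem_univ, true_and] at hb hb'
    exact (hc a (c b)).unique ⟨hb.1, rfl⟩ ⟨hb'.1, hbb'.symm⟩
  · intro i hi
    obtain ⟨b, ⟨hab, hcb⟩, -⟩ := hc a i
    exact ⟨b, by simp [hab, hcb, hi], hcb⟩

theorem degree_eq_card_colors [Fintype α] [DecidableRel A.Adj] [Fintype ι] (a : α) :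
    A.degree a = Fintype.card ι := by
  classical
  rw [← card_univ, ← card_filter_adj_color_mem hc a univ, ← card_neighborFinset_eq_degree]
  congr 1
  ext b
  simp

theorem degree_induce_color_mem [Fintype α] [DecidableRel A.Adj] [DecidableEq α]
    [DecidableEq ι] {v : α} {s : Finset ι} (hv : c v ∈ s) (a : {a | a ≠ v ∧ c a ∈ s}) :
    (A.induce {a | a ≠ v ∧ c a ∈ s}).degree a = #s - if A.Adj a v then 1 else 0 := by
  have hnbrs : A.neighborFinset a ∩ {a | a ≠ v ∧ c a ∈ s}.toFinset =
      ({b | A.Adj a b ∧ c b ∈ s} : Finset α).erase v := by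
    ext b
    simp only [mem_inter, mem_neighborFinset, Set.mem_toFinset, Set.mem_ofPred_eq, mem_erase,
      mem_filter, mem_univ, true_and]
    tauto
  rw [← card_neighborFinset_eq_degree, ← card_map, map_neighborFinset_induce, hnbrs,
    ← card_filter_adj_color_mem hc a s]
  split_ifs with hav
  · rw [card_erase_of_mem (by simp [hav, hv])]
  · rw [erase_eq_of_notMem (by simp [hav]), Nat.sub_zero]

theorem reachable_induce_compl_singleton_of_color_ne [Finite α] {v x y : α} (hx : A.Adj v x)
    (hy : A.Adj v y) (hcx : c x = c v) (hcy : c y ≠ c v) :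
    (A.induce {v}ᶜ).Reachable ⟨x, hx.ne'⟩ ⟨y, hy.ne'⟩ := by
  classical
  have : Fintype α := Fintype.ofFinite α
  let s : Finset ι := {c v, c y}
  let T : Set α := {a | a ≠ v ∧ c a ∈ s}
  have hxT : x ∈ T := ⟨hx.ne', by simp [s, hcx]⟩
  have hyT : y ∈ T := ⟨hy.ne', by simp [s]⟩
  have hdeg (a : T) : (A.induce T).degree a = 2 - if A.Adj a v then 1 else 0 := by
    rw [degree_induce_color_mem hc (by simp [s]), card_pair hcy.symm]
  have hx_odd : Odd ((A.induce T).degree ⟨x, hxT⟩) := by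
    rw [hdeg, if_pos hx.symm]
    exact odd_one
  have h_even (a : T) (hax : a ≠ ⟨x, hxT⟩) (hay : a ≠ ⟨y, hyT⟩) :
      Even ((A.induce T).degree a) := by
    rw [hdeg, if_neg]
    · exact even_two
    intro hadj
    rcases (by simpa [s] using a.2.2 : c a = c v ∨ c a = c y) with h | h
    · exact hax (Subtype.ext ((hc v (c v)).unique ⟨hadj.symm, h⟩ ⟨hx, hcx⟩))
    · exact hay (Subtype.ext ((hc v (c y)).unique ⟨hadj.symm, h⟩ ⟨hy, rfl⟩))
  exact (Reachable.of_odd_degree hx_odd h_even).map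
    (induceHomOfLE (G := A) (fun a ha => ha.1)).toHom

theorem connected_induce_compl_singleton [Finite α] (hA : A.Preconnected) (v : α) :
    (A.induce {v}ᶜ).Connected := by
  obtain ⟨x, ⟨hx, hcx⟩, -⟩ := hc v (c v)
  refine (connected_iff _).mpr
    ⟨hA.induce_compl_singleton_of_reachable_adj hx.ne' fun u hu => ?_, ⟨⟨x, hx.ne'⟩⟩⟩
  by_cases hcu : c u = c v
  · obtain rfl := (hc v (c v)).unique ⟨hu, hcu⟩ ⟨hx, hcx⟩
    rfl
  · exact reachable_induce_compl_singleton_of_color_ne hc hx hu hcx hcu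

end UniqueColoredNeighbors

end SimpleGraph

open SimpleGraph

/-- **Lemma.** Let `A` be a connected graph whose vertices are coloured with three colours
so that every vertex has exactly one neighbour of each colour. Then `A` is `2`-connected. -/
theorem three_coloured_cubic_two_connected {α : Type*} [Fintype α]
    (A : SimpleGraph α) (hA : A.Connected)
    (c : α → Fin 3)
    (hc : ∀ a : α, ∀ i : Fin 3, ∃! a', A.Adj a a' ∧ c a' = i) :
    KConnected 2 A := by
  classical
  obtain ⟨v⟩ := hA.nonempty
  have hcard : 2 < Fintype.card α :=
    calc 2 < Fintype.card (Fin 3) := by decide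
      _ = A.degree v := (degree_eq_card_colors hc v).symm
      _ < Fintype.card α := A.degree_lt_card_verts v
  exact kConnected_two_of_connected_induce_compl_singleton hcard hA
    (connected_induce_compl_singleton hc hA.preconnected)
end
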